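/- arXiv:1703.02288 — 2 statements merged into one kernel-verified Lean document; each statement's English description precedes it below -/
import Mathlib

section
/- Let F be a Fort space with particular point b and 𝔥 : F → F continuous. The following are equivalent: (a) (F, 𝔥) has the uniform stroboscopical property; (b) (F, 𝔥) has the stroboscopical property; (c) every point of F is a periodic point of 𝔥. -/
/-!
A point `z ≠ b` of the Fort space is isolated, so a sequence converges to it iff it is eventually
`z`; a sequence converges to `b` iff it eventually leaves every finite set avoiding `b`.
Hence the stroboscopical property along `A = id` makes every `z ≠ b` recur on some orbit, i.e.
periodic, and then `b` as well: otherwise `𝔥 x ≠ b` would be periodic and the tail of the orbit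
of `x` would stay in the finite orbit of `𝔥 x`, which avoids `b`, while accumulating at `b`.

Conversely, if every point is periodic then `𝔥` is injective, and by compactness of
`∏ m, ZMod m` some subsequence `A (k i)` is eventually constant modulo every period. Moving
each `z` backwards by that residue gives `ρ` with `𝔥^[A (k i)] ∘ ρ` eventually fixing each
point; for injective maps this pointwise statement is already uniform convergence to the
identity in the Fort uniformity.
-/

open Filter

/-- The Fort topology on a set `F` with particular point `b`:
`U` is open iff `b ∉ U` or `F \ U` is finite. -/
def fortTopology {F : Type*} (b : F) : TopologicalSpace F where
  IsOpen U := b ∉ U ∨ (Uᶜ : Set F).Finite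
  isOpen_univ := Or.inr (by simp)
  isOpen_inter := by
    rintro U V (hU | hU) hV
    · exact Or.inl fun h => hU h.1
    · rcases hV with hV | hV
      · exact Or.inl fun h => hV h.2
      · exact Or.inr (by rw [Set.compl_inter]; exact hU.union hV)
  isOpen_sUnion := by
    intro S hS
    by_cases hb : b ∈ ⋃₀ S
    · obtain ⟨U, hU, hbU⟩ := hb
      rcases hS U hU with h | h
      · exact absurd hbU h
      · exact Or.inr (h.subset (Set.compl_subset_compl.mpr (Set.subset_sUnion_of_mem hU)))
    · exact Or.inl hb

/-- The basic entourage `γ_H = ((F \ H) × (F \ H)) ∪ Δ_H` for `H ⊆ F`. -/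
def fortEnt {F : Type*} (H : Set F) : Set (F × F) :=
  (Hᶜ ×ˢ Hᶜ) ∪ {p : F × F | p.1 = p.2 ∧ p.1 ∈ H}

/-- Membership in the unique compatible uniform structure `𝒦` on the Fort space `F`
with particular point `b`: `D` contains some `γ_H` with `H ⊆ F \ {b}` finite. -/
def IsFortEntourage {F : Type*} (b : F) (D : Set (F × F)) : Prop :=
  ∃ H : Set F, H.Finite ∧ b ∉ H ∧ fortEnt H ⊆ D

/-- `ω_f(A, x)` with respect to a given topology: limits of convergent subsequences
of `(f^[A i] x)_i`. -/
def omegaLimitSet {Z : Type*} (t : TopologicalSpace Z) (f : Z → Z) (A : ℕ → ℕ) (x : Z) :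
    Set Z :=
  {y | ∃ k : ℕ → ℕ, StrictMono k ∧ Tendsto (fun i => f^[A (k i)] x) atTop (@nhds Z t y)}

/-- Stroboscopical property of `(F, 𝔥)` on the Fort space with particular point `b`. -/
def FortStrob {F : Type*} (b : F) (h : F → F) : Prop :=
  ∀ z : F, ∀ A : ℕ → ℕ, StrictMono A →
    ∃ x : F, z ∈ omegaLimitSet (fortTopology b) h A x

/-- Strongly stroboscopical property of `(F, 𝔥)`. -/
def FortStrongStrob {F : Type*} (b : F) (h : F → F) : Prop :=
  ∀ z : F, ∀ A : ℕ → ℕ, StrictMono A →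
    @Dense F (fortTopology b) {x : F | z ∈ omegaLimitSet (fortTopology b) h A x}

/-- Uniform stroboscopical property of `(F, 𝔥)` with respect to the uniform
structure `𝒦` of the Fort space. -/
def FortUnifStrob {F : Type*} (b : F) (h : F → F) : Prop :=
  ∀ A : ℕ → ℕ, StrictMono A → ∃ k : ℕ → ℕ, StrictMono k ∧
    ∃ ρ : F → F, ∀ D : Set (F × F), IsFortEntourage b D →
      ∃ N : ℕ, ∀ i, N ≤ i → ∀ z : F, (z, h^[A (k i)] (ρ z)) ∈ D

open Function Set

namespace Function

variable {α : Type*} {f : α → α} {x : α}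

theorem IsPeriodicPt.of_iterate_eq_iterate {m n : ℕ} (hmn : m ≤ n) (h : f^[n] x = f^[m] x) :
    IsPeriodicPt f (n - m) (f^[m] x) := by
  rw [IsPeriodicPt, IsFixedPt, ← iterate_add_apply, Nat.sub_add_cancel hmn, h]

theorem iterate_mem_periodicPts (hx : x ∈ periodicPts f) (m : ℕ) : f^[m] x ∈ periodicPts f :=
  let ⟨_, hn, hpx⟩ := hx
  mk_mem_periodicPts hn (hpx.apply_iterate m)

theorem finite_range_iterate_of_mem_periodicPts (hx : x ∈ periodicPts f) :
    (range fun n => f^[n] x).Finite :=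
  (finite_range fun n : Fin (minimalPeriod f x) => f^[n] x).subset <| by
    rintro _ ⟨n, rfl⟩
    exact ⟨⟨n % minimalPeriod f x, Nat.mod_lt _ (minimalPeriod_pos_of_mem_periodicPts hx)⟩,
      iterate_mod_minimalPeriod_eq⟩

theorem injective_of_forall_mem_periodicPts (h : ∀ x, x ∈ periodicPts f) : Injective f :=
  fun x y hxy => (bijOn_periodicPts f).injOn (h x) (h y) hxy

theorem IsPeriodicPt.iterate_iterate_val_neg_natCast {n : ℕ} [NeZero n]
    (hx : IsPeriodicPt f n x) (m : ℕ) : f^[m] (f^[(-(m : ZMod n)).val] x) = x := by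
  obtain ⟨q, hq⟩ : n ∣ m + (-(m : ZMod n)).val := by
    rw [← ZMod.natCast_eq_zero_iff]
    push_cast
    rw [ZMod.natCast_zmod_val, add_neg_cancel]
  rw [← iterate_add_apply, hq]
  exact hx.mul_const q

end Function

theorem exists_strictMono_forall_eventually_eq {ι : Type*} [Countable ι] {β : ι → Type*}
    [∀ i, Finite (β i)] (u : ℕ → ∀ i, β i) :
    ∃ φ : ℕ → ℕ, StrictMono φ ∧ ∀ i, ∃ c, ∀ᶠ n in atTop, u (φ n) i = c := by
  let _ : ∀ i, TopologicalSpace (β i) := fun _ => ⊥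
  have : ∀ i, DiscreteTopology (β i) := fun _ => ⟨rfl⟩
  obtain ⟨a, φ, hφ, hu⟩ := CompactSpace.tendsto_subseq u
  refine ⟨φ, hφ, fun i => ⟨a i, ?_⟩⟩
  have := ((continuous_apply i).tendsto a).comp hu
  rwa [nhds_discrete, tendsto_pure] at this

namespace FortTopology

variable {F : Type*} {b z : F}

theorem nhds_eq_pure_of_ne (hz : z ≠ b) : @nhds F (fortTopology b) z = pure z :=
  (@isOpen_singleton_iff_nhds_eq_pure F (fortTopology b) z).1 (Or.inl hz.symm)

theorem tendsto_nhds_iff_of_ne {α : Type*} {l : Filter α} {u : α → F} (hz : z ≠ b) :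
    Tendsto u l (@nhds F (fortTopology b) z) ↔ ∀ᶠ i in l, u i = z := by
  rw [nhds_eq_pure_of_ne hz, tendsto_pure]

theorem tendsto_nhds_self_iff {α : Type*} {l : Filter α} {u : α → F} :
    Tendsto u l (@nhds F (fortTopology b) b) ↔
      ∀ S : Set F, S.Finite → b ∉ S → ∀ᶠ i in l, u i ∉ S := by
  let _ := fortTopology b
  refine ⟨fun h S hS hbS => h (IsOpen.mem_nhds (Or.inr (by rwa [compl_compl])) hbS),
    fun h => (nhds_basis_opens b).tendsto_right_iff.2 fun V ⟨hbV, hV⟩ => ?_⟩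
  simpa using h Vᶜ (hV.resolve_left (not_not.2 hbV)) (not_not.2 hbV)

end FortTopology

section Entourage

variable {F : Type*} {H : Set F} {z y : F}

theorem mk_mem_fortEnt_iff_of_mem (hz : z ∈ H) : (z, y) ∈ fortEnt H ↔ y = z := by
  simp [fortEnt, hz, eq_comm]

theorem mk_mem_fortEnt_iff_of_notMem (hz : z ∉ H) : (z, y) ∈ fortEnt H ↔ y ∉ H := by
  simp [fortEnt, hz]

end Entourage

def FortTendstoUniformlyId {F : Type*} (b : F) (g : ℕ → F → F) : Prop :=
  ∀ D : Set (F × F), IsFortEntourage b D → ∃ N : ℕ, ∀ i, N ≤ i → ∀ z : F, (z, g i z) ∈ D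

namespace FortTendstoUniformlyId

variable {F : Type*} {b : F} {g : ℕ → F → F}

theorem tendsto (h : FortTendstoUniformlyId b g) (z : F) :
    Tendsto (fun i => g i z) atTop (@nhds F (fortTopology b) z) := by
  by_cases hz : z = b
  · subst hz
    refine FortTopology.tendsto_nhds_self_iff.2 fun S hS hzS => ?_
    obtain ⟨N, hN⟩ := h (fortEnt S) ⟨S, hS, hzS, subset_rfl⟩
    exact eventually_atTop.2 ⟨N, fun i hi => (mk_mem_fortEnt_iff_of_notMem hzS).1 (hN i hi z)⟩
  · refine (FortTopology.tendsto_nhds_iff_of_ne hz).2 ?_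
    obtain ⟨N, hN⟩ := h (fortEnt {z}) ⟨{z}, finite_singleton z, Ne.symm hz, subset_rfl⟩
    exact eventually_atTop.2
      ⟨N, fun i hi => (mk_mem_fortEnt_iff_of_mem (mem_singleton z)).1 (hN i hi z)⟩

theorem of_injective (hinj : ∀ i, Injective (g i)) (hg : ∀ z, ∀ᶠ i in atTop, g i z = z) :
    FortTendstoUniformlyId b g := by
  rintro D ⟨H, hH, -, hHD⟩
  obtain ⟨N, hN⟩ := eventually_atTop.1 ((eventually_all_finite hH).2 fun w _ => hg w)
  refine ⟨N, fun i hi z => hHD ?_⟩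
  by_cases hz : z ∈ H
  · exact (mk_mem_fortEnt_iff_of_mem hz).2 (hN i hi z hz)
  · exact (mk_mem_fortEnt_iff_of_notMem hz).2 fun hgz => hz (hinj i (hN i hi _ hgz) ▸ hgz)

end FortTendstoUniformlyId

section Equivalence

variable {F : Type*} {b : F} {f : F → F}

theorem FortUnifStrob.fortStrob (h : FortUnifStrob b f) : FortStrob b f := by
  intro z A hA
  obtain ⟨k, hk, ρ, hρ⟩ := h A hA
  exact ⟨ρ z, k, hk, FortTendstoUniformlyId.tendsto (g := fun i => f^[A (k i)] ∘ ρ) hρ z⟩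

theorem FortStrob.mem_periodicPts_of_ne (h : FortStrob b f) {z : F} (hz : z ≠ b) :
    z ∈ periodicPts f := by
  obtain ⟨x, k, hk, hx⟩ := h z id strictMono_id
  obtain ⟨N, hN⟩ := eventually_atTop.1 ((FortTopology.tendsto_nhds_iff_of_ne hz).1 hx)
  have hlt : k N < k (N + 1) := hk N.lt_succ_self
  have hper :=
    IsPeriodicPt.of_iterate_eq_iterate hlt.le ((hN _ N.le_succ).trans (hN N le_rfl).symm)
  exact mk_mem_periodicPts (Nat.sub_pos_of_lt hlt) (hN N le_rfl ▸ hper)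

theorem FortStrob.mem_periodicPts (h : FortStrob b f) (z : F) : z ∈ periodicPts f := by
  by_cases hz : z = b
  swap
  · exact h.mem_periodicPts_of_ne hz
  subst hz
  by_contra hz
  obtain ⟨x, k, hk, hx⟩ := h z id strictMono_id
  have hfx : f x ≠ z := by
    intro hfx
    rcases eq_or_ne x z with rfl | hxz
    · exact hz (mk_mem_periodicPts one_pos hfx)
    · exact hz (hfx ▸ iterate_mem_periodicPts (h.mem_periodicPts_of_ne hxz) 1)
  have hy : f x ∈ periodicPts f := h.mem_periodicPts_of_ne hfx
  have hzS : z ∉ range fun n => f^[n] (f x) := by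
    rintro ⟨n, hn⟩
    exact hz (hn ▸ iterate_mem_periodicPts hy n)
  have hin : ∀ᶠ i in atTop, f^[k i] x ∈ range fun n => f^[n] (f x) :=
    (hk.tendsto_atTop.eventually_ge_atTop 1).mono fun i hi =>
      ⟨k i - 1, by simp only [← iterate_succ_apply, Nat.succ_eq_add_one, Nat.sub_add_cancel hi]⟩
  obtain ⟨i, hin, hout⟩ := (hin.and (FortTopology.tendsto_nhds_self_iff.1 hx _
    (finite_range_iterate_of_mem_periodicPts hy) hzS)).exists
  exact hout hin

theorem fortUnifStrob_of_forall_mem_periodicPts (h : ∀ x, x ∈ periodicPts f) :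
    FortUnifStrob b f := by
  intro A hA
  have hinj := injective_of_forall_mem_periodicPts h
  have hper (z : F) : ∃ n : ℕ+, IsPeriodicPt f n z :=
    let ⟨n, hn, hz⟩ := h z
    ⟨⟨n, hn⟩, hz⟩
  choose p hp using hper
  obtain ⟨k, hk, hres⟩ := exists_strictMono_forall_eventually_eq
    (fun n (m : ℕ+) => (A n : ZMod m))
  choose c hc using hres
  let ρ z := f^[(-c (p z)).val] z
  have hρ : ∀ z, ∀ᶠ i in atTop, f^[A (k i)] (ρ z) = z := fun z =>
    (hc (p z)).mono fun i hi => by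
      simpa only [ρ, ← hi] using IsPeriodicPt.iterate_iterate_val_neg_natCast (hp z) (A (k i))
  have hρinj : Injective ρ := fun z w hzw => by
    obtain ⟨i, hz, hw⟩ := ((hρ z).and (hρ w)).exists
    rw [← hz, ← hw, hzw]
  exact ⟨k, hk, ρ, FortTendstoUniformlyId.of_injective (fun i => (hinj.iterate _).comp hρinj) hρ⟩

end Equivalence

theorem stmt_18_general {F : Type*} (b : F) (𝔥 : F → F) :
    (FortUnifStrob b 𝔥 ↔ FortStrob b 𝔥) ∧
    (FortStrob b 𝔥 ↔ ∀ x : F, ∃ m : ℕ, 1 ≤ m ∧ 𝔥^[m] x = x) :=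
  ⟨⟨FortUnifStrob.fortStrob, fun h => fortUnifStrob_of_forall_mem_periodicPts h.mem_periodicPts⟩,
    ⟨FortStrob.mem_periodicPts, fun h => (fortUnifStrob_of_forall_mem_periodicPts h).fortStrob⟩⟩

/-- for continuous `𝔥` on the Fort space `F`, the uniform
stroboscopical property, the stroboscopical property, and "every point of `F` is
periodic for `𝔥`" are equivalent. -/
theorem stmt_18 {F : Type*} (b : F) (𝔥 : F → F)
    (hcont : @Continuous F F (fortTopology b) (fortTopology b) 𝔥) :
    (FortUnifStrob b 𝔥 ↔ FortStrob b 𝔥) ∧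
    (FortStrob b 𝔥 ↔ ∀ x : F, ∃ m : ℕ, 1 ≤ m ∧ 𝔥^[m] x = x) :=
  stmt_18_general b 𝔥
end

section
/- Let F be a Fort space with particular point b and 𝔥 : F → F continuous. Then (F, 𝔥) has the strongly stroboscopical property if and only if F = {b}. -/
open Filter

section Aux

variable {F : Type*}

lemma fort_singleton_open {b a : F} (h : a ≠ b) :
    @IsOpen F (fortTopology b) {a} :=
  Or.inl (by simp [Ne.symm h])

lemma fort_compl_singleton_open (b : F) (a : F) :
    @IsOpen F (fortTopology b) ({a}ᶜ) :=
  Or.inr (by simp)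

lemma fort_dense_mem {b : F} {S : Set F}
    (hS : @Dense F (fortTopology b) S) {a : F} (ha : a ≠ b) : a ∈ S := by
  letI : TopologicalSpace F := fortTopology b
  have := mem_closure_iff.mp (hS a) {a} (fort_singleton_open ha) rfl
  obtain ⟨y, hy1, hy2⟩ := this
  rwa [Set.mem_singleton_iff.mp hy1] at hy2

lemma fort_tendsto_eventually {b a : F} (ha : a ≠ b) {c : ℕ → F}
    (h : Tendsto c atTop (@nhds F (fortTopology b) a)) :
    ∀ᶠ i in atTop, c i = a := by
  letI : TopologicalSpace F := fortTopology b
  exact h.eventually ((fort_singleton_open ha).mem_nhds rfl)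

end Aux

/-- for continuous `𝔥` on the Fort space `F`, `(F, 𝔥)` has the
strongly stroboscopical property iff `F = {b}`. -/
theorem stmt_19 {F : Type*} (b : F) (𝔥 : F → F)
    (hcont : @Continuous F F (fortTopology b) (fortTopology b) 𝔥) :
    FortStrongStrob b 𝔥 ↔ ∀ x : F, x = b := by
  constructor
  · intro hstrob x
    by_contra hx
    -- Step 1: there exists p > 0 with 𝔥^[p] x = x
    have h1 : ∃ p, 0 < p ∧ 𝔥^[p] x = x := by
      have hd := hstrob x id strictMono_id
      have hm : x ∈ {y : F | x ∈ omegaLimitSet (fortTopology b) 𝔥 id y} :=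
        fort_dense_mem hd hx
      obtain ⟨k, hk, htend⟩ := hm
      have hev := fort_tendsto_eventually hx htend
      obtain ⟨N, hN⟩ := eventually_atTop.mp hev
      have h1 : 𝔥^[k N] x = x := hN N le_rfl
      have h2 : 𝔥^[k (N + 1)] x = x := hN (N + 1) (Nat.le_succ N)
      refine ⟨k (N + 1) - k N, ?_, ?_⟩
      · have := hk (show N < N + 1 by omega)
        omega
      · have hsum : k (N + 1) - k N + k N = k (N + 1) := by
          have := hk (show N < N + 1 by omega); omega
        have := Function.iterate_add_apply 𝔥 (k (N + 1) - k N) (k N) x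
        rw [h1, hsum, h2] at this
        exact this.symm
    obtain ⟨p, hp, hpx⟩ := h1
    -- Step 2: 𝔥 x = x
    have hfix : 𝔥 x = x := by
      have hA : StrictMono (fun i => p * i + 1) := by
        intro i j hij
        simp only
        have : p * i < p * j := (Nat.mul_lt_mul_left hp).mpr hij
        omega
      have hd := hstrob x (fun i => p * i + 1) hA
      have hm : x ∈ {y : F |
          x ∈ omegaLimitSet (fortTopology b) 𝔥 (fun i => p * i + 1) y} :=
        fort_dense_mem hd hx
      obtain ⟨k, hk, htend⟩ := hm
      have hev := fort_tendsto_eventually hx htend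
      obtain ⟨N, hN⟩ := eventually_atTop.mp hev
      have h1 : 𝔥^[p * k N + 1] x = x := hN N le_rfl
      have h2 : 𝔥^[p * k N] x = x := by
        rw [Function.iterate_mul]
        exact Function.iterate_fixed hpx (k N)
      rw [Function.iterate_succ_apply', h2] at h1
      exact h1
    -- Step 3: contradiction using z = b
    have hd := hstrob b id strictMono_id
    have hm : x ∈ {y : F | b ∈ omegaLimitSet (fortTopology b) 𝔥 id y} :=
      fort_dense_mem hd hx
    obtain ⟨k, hk, htend⟩ := hm
    have hconst : ∀ i, 𝔥^[id (k i)] x = x := fun i => Function.iterate_fixed hfix _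
    have hopen := fort_compl_singleton_open b x
    have hbmem : b ∈ ({x}ᶜ : Set F) := by simpa using Ne.symm hx
    letI : TopologicalSpace F := fortTopology b
    have hev := htend.eventually (hopen.mem_nhds hbmem)
    obtain ⟨i, hi⟩ := hev.exists
    rw [hconst i] at hi
    exact hi rfl
  · intro hall z A hA
    letI : TopologicalSpace F := fortTopology b
    have : {x : F | z ∈ omegaLimitSet (fortTopology b) 𝔥 A x} = Set.univ := by
      ext x
      simp only [Set.mem_setOf_eq, Set.mem_univ, iff_true]
      refine ⟨id, strictMono_id, ?_⟩
      have hx : ∀ n, 𝔥^[n] x = z := by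
        intro n
        rw [hall (𝔥^[n] x), hall z]
      simpa [hx] using tendsto_const_nhds
    rw [this]
    exact dense_univ
end
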